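/- In the sedenion algebra 𝕊, with α = e₁ + e₁₀ and β = e₇ + e₁₂, the polynomial f(x) = β x² + β x decomposes as f(x) = (β x + β)(x − α), yet f(α) = −2β ≠ 0, so α is not a root of f. Hence a right factor x − λ does not imply λ is a root over 𝕊. -/

import Mathlib

/-- Cayley–Dickson double (with γ = -1) of an algebra with involution. -/
def CD (A : Type*) : Type _ := A × A

namespace CD

variable {A : Type*}

instance [AddCommGroup A] : AddCommGroup (CD A) := inferInstanceAs (AddCommGroup (A × A))
noncomputable instance [AddCommGroup A] [Module ℝ A] : Module ℝ (CD A) :=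
  inferInstanceAs (Module ℝ (A × A))

/-- Build an element of the double from its two halves. -/
def mk (a b : A) : CD A := (a, b)

section
set_option linter.unusedSectionVars false

/-- A star operation fixing `1`. -/
class StarOne (A : Type*) [One A] [Star A] : Prop where
  star_one : star (1 : A) = 1

variable [NonAssocRing A] [StarAddMonoid A] [StarOne A]

instance : One (CD A) := ⟨((1 : A), 0)⟩
instance : Mul (CD A) :=
  ⟨fun x y => (x.1 * y.1 - star y.2 * x.2, y.2 * x.1 + x.2 * star y.1)⟩
instance : Star (CD A) := ⟨fun x => (star x.1, -x.2)⟩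

lemma mul_def (x y : CD A) :
    x * y = (x.1 * y.1 - star y.2 * x.2, y.2 * x.1 + x.2 * star y.1) := rfl
lemma one_def : (1 : CD A) = ((1 : A), 0) := rfl
lemma star_def (x : CD A) : star x = (star x.1, -x.2) := rfl
lemma add_def (x y : CD A) : x + y = (x.1 + y.1, x.2 + y.2) := rfl
lemma zero_def : (0 : CD A) = ((0 : A), 0) := rfl

instance instNonAssocRing : NonAssocRing (CD A) where
  __ := (inferInstanceAs (AddCommGroup (A × A)) : AddCommGroup (CD A))
  left_distrib a b c := by
    show ((a.1 * (b.1 + c.1) - star (b.2 + c.2) * a.2,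
      (b.2 + c.2) * a.1 + a.2 * star (b.1 + c.1)) : A × A) =
      ((a.1 * b.1 - star b.2 * a.2) + (a.1 * c.1 - star c.2 * a.2),
      (b.2 * a.1 + a.2 * star b.1) + (c.2 * a.1 + a.2 * star c.1))
    refine Prod.ext ?_ ?_ <;>
      simp [mul_add, add_mul, star_add] <;> abel
  right_distrib a b c := by
    show (((a.1 + b.1) * c.1 - star c.2 * (a.2 + b.2),
      c.2 * (a.1 + b.1) + (a.2 + b.2) * star c.1) : A × A) =
      ((a.1 * c.1 - star c.2 * a.2) + (b.1 * c.1 - star c.2 * b.2),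
      (c.2 * a.1 + a.2 * star c.1) + (c.2 * b.1 + b.2 * star c.1))
    refine Prod.ext ?_ ?_ <;>
      simp [mul_add, add_mul, star_add] <;> abel
  zero_mul a := by
    show (((0 : A) * a.1 - star a.2 * 0, a.2 * 0 + 0 * star a.1) : A × A) = (0, 0)
    refine Prod.ext ?_ ?_ <;> simp [mul_def, zero_def]
  mul_zero a := by
    show ((a.1 * 0 - star (0 : A) * a.2, 0 * a.1 + a.2 * star (0 : A)) : A × A) = (0, 0)
    refine Prod.ext ?_ ?_ <;> simp [mul_def, zero_def]
  one_mul a := by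
    show (((1 : A) * a.1 - star a.2 * 0, a.2 * 1 + 0 * star a.1) : A × A) = a
    refine Prod.ext ?_ ?_ <;> simp [mul_def, one_def]
  mul_one a := by
    show ((a.1 * 1 - star (0 : A) * a.2, 0 * a.1 + a.2 * star (1 : A)) : A × A) = a
    refine Prod.ext ?_ ?_ <;> simp [mul_def, one_def, StarOne.star_one]

instance instStarAddMonoid : StarAddMonoid (CD A) where
  star_involutive x := by
    show ((star (star x.1), -(-x.2)) : A × A) = x
    refine Prod.ext ?_ ?_ <;> simp
  star_add x y := by
    show ((star (x.1 + y.1), -(x.2 + y.2)) : A × A) = (star x.1 + star y.1, -x.2 + -y.2)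
    refine Prod.ext ?_ ?_ <;> simp [add_comm]

instance instStarOne : StarOne (CD A) :=
  ⟨Prod.ext (StarOne.star_one) (by show -(0 : A) = 0; simp)⟩

end

end CD

instance : CD.StarOne ℝ := ⟨by simp⟩

/-- The real octonions, as a three-fold Cayley–Dickson double of ℝ. -/
def Octonion : Type := CD (CD (CD ℝ))

instance : NonAssocRing Octonion := inferInstanceAs (NonAssocRing (CD (CD (CD ℝ))))
instance : StarAddMonoid Octonion := inferInstanceAs (StarAddMonoid (CD (CD (CD ℝ))))
instance : CD.StarOne Octonion := inferInstanceAs (CD.StarOne (CD (CD (CD ℝ))))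
noncomputable instance : Module ℝ Octonion := inferInstanceAs (Module ℝ (CD (CD (CD ℝ))))

/-- The real sedenions, as the Cayley–Dickson double of the octonions. -/
def Sedenion : Type := CD Octonion

instance : NonAssocRing Sedenion := inferInstanceAs (NonAssocRing (CD Octonion))
instance : StarAddMonoid Sedenion := inferInstanceAs (StarAddMonoid (CD Octonion))
instance : CD.StarOne Sedenion := inferInstanceAs (CD.StarOne (CD Octonion))
noncomputable instance : Module ℝ Sedenion := inferInstanceAs (Module ℝ (CD Octonion))

/-- Assemble a complex number, quaternion, octonion, sedenion from real coordinates. -/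
def mkC (f : ℕ → ℝ) (k : ℕ) : CD ℝ := CD.mk (f k) (f (k+1))
def mkH (f : ℕ → ℝ) (k : ℕ) : CD (CD ℝ) := CD.mk (mkC f k) (mkC f (k+2))
def mkO (f : ℕ → ℝ) (k : ℕ) : Octonion := CD.mk (mkH f k) (mkH f (k+4))
def mkS (f : ℕ → ℝ) : Sedenion := CD.mk (mkO f 0) (mkO f 8)

/-- The standard basis `e₀, …, e₁₅` of the sedenions. -/
def sE (n : ℕ) : Sedenion := mkS (fun k => if k = n then 1 else 0)

/-- The standard basis `e₀, …, e₇` of the octonions. -/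
def oE (n : ℕ) : Octonion := mkO (fun k => if k = n then 1 else 0) 0

/-- Powers in a (power-associative) non-associative algebra. -/
def cdpow {A : Type*} [One A] [Mul A] (x : A) : ℕ → A
  | 0 => 1
  | n+1 => cdpow x n * x


namespace CD

variable {A : Type*}

@[simp] lemma mk_add_mk [AddCommGroup A] (a b c d : A) : mk a b + mk c d = mk (a + c) (b + d) :=
  rfl
@[simp] lemma mk_sub_mk [AddCommGroup A] (a b c d : A) : mk a b - mk c d = mk (a - c) (b - d) :=
  rfl
@[simp] lemma neg_mk [AddCommGroup A] (a b : A) : -mk a b = mk (-a) (-b) := rfl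
lemma zero_eq_mk [AddCommGroup A] : (0 : CD A) = mk 0 0 := rfl
@[simp] lemma mk_inj (a b c d : A) : mk a b = mk c d ↔ a = c ∧ b = d := Prod.mk_inj

lemma one_eq_mk [NonAssocRing A] [StarAddMonoid A] [StarOne A] : (1 : CD A) = mk 1 0 := rfl

variable [NonAssocRing A] [StarAddMonoid A]

@[simp] lemma star_mk (a b : A) : star (mk a b) = mk (star a) (-b) := rfl
@[simp] lemma mk_mul_mk (a b c d : A) :
    mk a b * mk c d = mk (a * c - star d * b) (d * a + b * star c) := rfl

end CD

lemma cdpow_two {A : Type*} [MulOneClass A] (x : A) : cdpow x 2 = x * x := by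
  rw [cdpow, cdpow, cdpow, one_mul]

/- `Sedenion` and `Octonion` are plain `def`s, so simp lemmas about `CD A` do not fire on them;
along this identity map every level of the tower becomes a genuine `CD`. -/
def Sedenion.toCD (x : Sedenion) : CD (CD (CD (CD ℝ))) := x

namespace Sedenion

lemma toCD_injective : Function.Injective toCD := fun _ _ h => h

@[simp] lemma toCD_add (x y : Sedenion) : toCD (x + y) = toCD x + toCD y := rfl
@[simp] lemma toCD_mul (x y : Sedenion) : toCD (x * y) = toCD x * toCD y := rfl
@[simp] lemma toCD_neg (x : Sedenion) : toCD (-x) = -toCD x := rfl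
@[simp] lemma toCD_zero : toCD 0 = 0 := rfl
@[simp] lemma toCD_one : toCD 1 = 1 := rfl
@[simp] lemma toCD_mkS (f : ℕ → ℝ) :
    toCD (mkS f) = CD.mk (CD.mk (mkH f 0) (mkH f 4)) (CD.mk (mkH f 8) (mkH f 12)) := rfl

local notation "α" => sE 1 + sE 10
local notation "β" => sE 7 + sE 12

lemma beta_mul_alpha : β * α = 0 := by
  apply toCD_injective
  simp only [toCD_add, toCD_mul, toCD_zero, toCD_mkS, sE, mkH, mkC, CD.mk_add_mk, CD.mk_sub_mk,
    CD.neg_mk, CD.star_mk, CD.mk_mul_mk, CD.zero_eq_mk, CD.mk_inj]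
  norm_num

lemma alpha_mul_alpha : α * α = -2 := by
  rw [← one_add_one_eq_two]
  apply toCD_injective
  simp only [toCD_add, toCD_mul, toCD_neg, toCD_one, toCD_mkS, sE, mkH, mkC, CD.mk_add_mk,
    CD.mk_sub_mk, CD.neg_mk, CD.star_mk, CD.mk_mul_mk, CD.one_eq_mk, CD.zero_eq_mk, CD.mk_inj]
  norm_num

lemma beta_add_beta_ne_zero : β + β ≠ 0 := by
  rw [← toCD_injective.ne_iff]
  simp only [toCD_add, toCD_zero, toCD_mkS, sE, mkH, mkC, CD.mk_add_mk, CD.zero_eq_mk]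
  norm_num

end Sedenion

lemma mul_cdpow_two_add_mul_eq {R : Type*} [NonAssocRing R] {a b : R} (hba : b * a = 0)
    (haa : a * a = -2) : b * cdpow a 2 + b * a = -2 * b := by
  rw [cdpow_two, haa, hba, add_zero, mul_neg, neg_mul, mul_two, two_mul]

/-- In the sedenions, with `α = e₁ + e₁₀` and `β = e₇ + e₁₂`, the
polynomial `f(x) = β x² + β x` decomposes as `(β x + β)(x - α)` — coefficientwise the
product `(β x + β)(x - α)` has coefficients `-(βα) = 0`, `β - βα = β`, `β` matching those
of `f` — and yet `f(α) = β α² + β α = -2β ≠ 0`, so `α` is not a root of `f`. -/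
theorem stmt4 :
    (-(  (sE 7 + sE 12) * (sE 1 + sE 10)) = 0 ∧
      (sE 7 + sE 12) - (sE 7 + sE 12) * (sE 1 + sE 10) = sE 7 + sE 12) ∧
    (sE 7 + sE 12) * cdpow (sE 1 + sE 10) 2 + (sE 7 + sE 12) * (sE 1 + sE 10)
      = -(2 : Sedenion) * (sE 7 + sE 12) ∧
    (sE 7 + sE 12) * cdpow (sE 1 + sE 10) 2 + (sE 7 + sE 12) * (sE 1 + sE 10) ≠ 0 := by
  have hβα := Sedenion.beta_mul_alpha
  have heval := mul_cdpow_two_add_mul_eq hβα Sedenion.alpha_mul_alpha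
  refine ⟨⟨by rw [hβα, neg_zero], by rw [hβα, sub_zero]⟩, heval, ?_⟩
  rw [heval, neg_mul, two_mul, neg_ne_zero]
  exact Sedenion.beta_add_beta_ne_zero
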